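/- arXiv:2005.13366 — 4 statements merged into one kernel-verified Lean document; each statement's English description precedes it below -/
import Mathlib

section
/- Let f : EuclideanSpace ℝ (Fin d) → ℝ be differentiable with L-Lipschitz gradient (L > 0) and bounded below. Let (x_k) be generated by deterministic gradient descent x_{k+1} = x_k - α_k • ∇f(x_k) with step sizes satisfying α_k ≥ 0, ∑_{k=0}^∞ α_k = ∞ and ∑_{k=0}^∞ α_k² < ∞. Then lim_{k→∞} ‖∇f(x_k)‖ = 0, and the sequence f(x_k) converges to a finite limit. -/
open Filter Topology

set_option maxHeartbeats 1000000 in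
/-- **Deterministic case of Theorem 1.** Gradient descent with Robbins–Monro step sizes
on a differentiable objective with `L`-Lipschitz gradient that is bounded below drives
the gradient norm to zero, and the objective values converge to a finite limit. -/
theorem gradient_descent_robbins_monro_convergence
    {d : ℕ} (f : EuclideanSpace ℝ (Fin d) → ℝ) (L : ℝ) (hL : 0 < L)
    (hdiff : Differentiable ℝ f)
    (hlip : ∀ x y : EuclideanSpace ℝ (Fin d),
      ‖gradient f x - gradient f y‖ ≤ L * ‖x - y‖)
    (hbelow : ∃ B : ℝ, ∀ x, B ≤ f x)
    (x : ℕ → EuclideanSpace ℝ (Fin d)) (α : ℕ → ℝ)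
    (hupd : ∀ k, x (k + 1) = x k - α k • gradient f (x k))
    (hα_nonneg : ∀ k, 0 ≤ α k)
    (hα_div : Tendsto (fun n => ∑ k ∈ Finset.range n, α k) atTop atTop)
    (hα_sq : Summable fun k => (α k) ^ 2) :
    Tendsto (fun k => ‖gradient f (x k)‖) atTop (𝓝 0) ∧
      ∃ c : ℝ, Tendsto (fun k => f (x k)) atTop (𝓝 c) := by
  obtain ⟨B, hB⟩ := hbelow
  set g : ℕ → EuclideanSpace ℝ (Fin d) := fun k => gradient f (x k) with hg
  set u : ℕ → ℝ := fun k => ‖g k‖ ^ 2 with hu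
  have hu_nonneg : ∀ k, 0 ≤ u k := fun k => sq_nonneg _
  have hstep : ∀ k, x (k + 1) - x k = -(α k) • g k := by
    intro k; rw [hupd k]; module
  have hstepnorm : ∀ k, ‖x (k + 1) - x k‖ = α k * ‖g k‖ := by
    intro k
    rw [hstep k, norm_smul, Real.norm_eq_abs, abs_neg, abs_of_nonneg (hα_nonneg k)]
  have hfd : ∀ z : EuclideanSpace ℝ (Fin d), fderiv ℝ f z = InnerProductSpace.toDual ℝ _ (gradient f z) :=
    fun z => ((InnerProductSpace.toDual ℝ _).apply_symm_apply _).symm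
  -- descent inequality
  have hdescent : ∀ k, f (x (k + 1)) ≤ f (x k) - α k * u k + L * α k ^ 2 * u k := by
    intro k
    have key : ‖f (x (k + 1)) - f (x k) - (fderiv ℝ f (x k)) (x (k + 1) - x k)‖
        ≤ (L * ‖x (k + 1) - x k‖) * ‖x (k + 1) - x k‖ := by
      refine Convex.norm_image_sub_le_of_norm_fderiv_le' (f := f)
        (s := segment ℝ (x k) (x (k + 1))) (fun z _ => hdiff z) ?_
        (convex_segment _ _) (left_mem_segment _ _ _) (right_mem_segment _ _ _)
      rintro z ⟨a, b, ha, hb, hab, rfl⟩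
      have hz : a • x k + b • x (k + 1) - x k = b • (x (k + 1) - x k) := by
        have : a = 1 - b := by linarith
        subst this; module
      calc ‖fderiv ℝ f (a • x k + b • x (k + 1)) - fderiv ℝ f (x k)‖
          = ‖gradient f (a • x k + b • x (k + 1)) - gradient f (x k)‖ := by
            rw [hfd, hfd, ← map_sub, LinearIsometryEquiv.norm_map]
        _ ≤ L * ‖a • x k + b • x (k + 1) - x k‖ := hlip _ _
        _ ≤ L * ‖x (k + 1) - x k‖ := by
            rw [hz, norm_smul, Real.norm_eq_abs, abs_of_nonneg hb]
            have hnn := norm_nonneg (x (k + 1) - x k)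
            have hb1 : b ≤ 1 := by linarith
            have h2 : b * ‖x (k + 1) - x k‖ ≤ ‖x (k + 1) - x k‖ := by nlinarith
            exact mul_le_mul_of_nonneg_left h2 hL.le
    have hinner : (fderiv ℝ f (x k)) (x (k + 1) - x k) = -(α k * u k) := by
      rw [hfd, InnerProductSpace.toDual_apply_apply, hstep k, inner_smul_right,
        real_inner_self_eq_norm_sq]
      simp [hu, hg]
    rw [hinner, hstepnorm k] at key
    have key' : f (x (k + 1)) - f (x k) - -(α k * u k)
        ≤ (L * (α k * ‖g k‖)) * (α k * ‖g k‖) := le_trans (le_abs_self _) key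
    have : (L * (α k * ‖g k‖)) * (α k * ‖g k‖) = L * α k ^ 2 * u k := by
      simp only [hu]; ring
    linarith [key'.trans_eq this]
  -- α tends to 0
  have hα0 : Tendsto α atTop (𝓝 0) := by
    have h1 : Tendsto (fun k => Real.sqrt (α k ^ 2)) atTop (𝓝 0) := by
      have := (Real.continuous_sqrt.tendsto 0).comp hα_sq.tendsto_atTop_zero
      simpa [Function.comp_def] using this
    refine h1.congr fun k => ?_
    rw [Real.sqrt_sq (hα_nonneg k)]
  obtain ⟨N, hN⟩ : ∃ N, ∀ k ≥ N, α k ≤ min (1 / (2 * L)) 1 := by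
    have : ∀ᶠ k in atTop, α k < min (1 / (2 * L)) 1 :=
      hα0.eventually (eventually_lt_nhds (by positivity))
    obtain ⟨N, hN⟩ := eventually_atTop.1 this
    exact ⟨N, fun k hk => (hN k hk).le⟩
  have hNle1 : ∀ k ≥ N, α k ≤ 1 := fun k hk => (hN k hk).trans (min_le_right _ _)
  have hNle2L : ∀ k ≥ N, α k ≤ 1 / (2 * L) := fun k hk => (hN k hk).trans (min_le_left _ _)
  -- strict-ish decrease after N
  have hdec : ∀ k, N ≤ k → f (x (k + 1)) + α k / 2 * u k ≤ f (x k) := by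
    intro k hk
    have h1 := hdescent k
    have h2 := hNle2L k hk
    have h3 : L * α k ^ 2 * u k ≤ α k / 2 * u k := by
      have : α k * (α k * u k) ≤ 1 / (2 * L) * (α k * u k) :=
        mul_le_mul_of_nonneg_right h2 (mul_nonneg (hα_nonneg k) (hu_nonneg k))
      have hL' : (0:ℝ) < 2 * L := by linarith
      calc L * α k ^ 2 * u k = L * (α k * (α k * u k)) := by ring
        _ ≤ L * (1 / (2 * L) * (α k * u k)) := by nlinarith
        _ = α k / 2 * u k := by field_simp
    linarith
  -- f (x k) converges
  have hanti : Antitone fun k => f (x (N + k)) := by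
    refine antitone_nat_of_succ_le fun k => ?_
    have h := hdec (N + k) (Nat.le_add_right _ _)
    have hnn := mul_nonneg (by linarith [hα_nonneg (N + k)] : (0:ℝ) ≤ α (N + k) / 2)
      (hu_nonneg (N + k))
    calc f (x (N + (k + 1))) = f (x (N + k + 1)) := by ring_nf
      _ ≤ f (x (N + k)) := by linarith
  have hbdd : BddBelow (Set.range fun k => f (x (N + k))) := by
    refine ⟨B, ?_⟩; rintro _ ⟨k, rfl⟩; exact hB _
  have hfconv' : Tendsto (fun k => f (x (N + k))) atTop (𝓝 (⨅ k, f (x (N + k)))) :=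
    tendsto_atTop_ciInf hanti hbdd
  have hfconv : Tendsto (fun k => f (x k)) atTop (𝓝 (⨅ k, f (x (N + k)))) := by
    rw [← tendsto_add_atTop_iff_nat N]
    refine hfconv'.congr fun k => by rw [add_comm]
  -- summability of α * u
  have hpartial : ∀ n, ∑ k ∈ Finset.range n, α (N + k) / 2 * u (N + k)
      ≤ f (x N) - f (x (N + n)) := by
    intro n
    induction n with
    | zero => simp
    | succ n ih =>
      rw [Finset.sum_range_succ]
      have h := hdec (N + n) (Nat.le_add_right _ _)
      have : f (x (N + (n + 1))) = f (x (N + n + 1)) := by ring_nf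
      linarith
  have hsum_shift : Summable fun k => α (N + k) * u (N + k) := by
    have hb : ∀ n, ∑ k ∈ Finset.range n, α (N + k) * u (N + k) ≤ 2 * (f (x N) - B) := by
      intro n
      have h1 := hpartial n
      have h2 := hB (x (N + n))
      have : ∑ k ∈ Finset.range n, α (N + k) * u (N + k)
          = 2 * ∑ k ∈ Finset.range n, α (N + k) / 2 * u (N + k) := by
        rw [Finset.mul_sum]; congr 1; ext k; ring
      rw [this]; linarith
    exact summable_of_sum_range_le
      (fun k => mul_nonneg (hα_nonneg _) (hu_nonneg _)) hb
  have hsum_αu : Summable fun k => α k * u k := by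
    refine (summable_nat_add_iff N).1 ?_
    refine hsum_shift.congr fun k => by rw [add_comm]
  -- summability of α^2 * u
  have hsum_α2u : Summable fun k => α k ^ 2 * u k := by
    refine (summable_nat_add_iff N).1 ?_
    refine Summable.of_nonneg_of_le (fun k => mul_nonneg (sq_nonneg _) (hu_nonneg _))
      (fun k => ?_) hsum_shift
    have h1 := hNle1 (N + k) (Nat.le_add_right _ _)
    have h2 := hα_nonneg (N + k)
    have h3 := hu_nonneg (N + k)
    rw [show k + N = N + k from add_comm k N]
    nlinarith [mul_nonneg (mul_nonneg (sub_nonneg.2 h1) h2) h3]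
  -- the perturbation δ
  set δ : ℕ → ℝ := fun k => 2 * L * (α k * u k) + L ^ 2 * (α k ^ 2 * u k) with hδdef
  have hδ_nonneg : ∀ k, 0 ≤ δ k := by
    intro k
    have := mul_nonneg (hα_nonneg k) (hu_nonneg k)
    have := mul_nonneg (sq_nonneg (α k)) (hu_nonneg k)
    positivity
  have hδ_sum : Summable δ := ((hsum_αu.mul_left (2 * L)).add (hsum_α2u.mul_left (L ^ 2)))
  have hkey : ∀ k, u (k + 1) ≤ u k + δ k := by
    intro k
    have h1 : ‖g (k + 1) - g k‖ ≤ L * (α k * ‖g k‖) := by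
      have := hlip (x (k + 1)) (x k)
      rwa [hstepnorm k] at this
    have h2 : ‖g (k + 1)‖ ≤ ‖g k‖ + L * (α k * ‖g k‖) := by
      calc ‖g (k + 1)‖ = ‖g k + (g (k + 1) - g k)‖ := by congr 1; abel
        _ ≤ ‖g k‖ + ‖g (k + 1) - g k‖ := norm_add_le _ _
        _ ≤ ‖g k‖ + L * (α k * ‖g k‖) := by linarith
    have h3 : ‖g (k + 1)‖ ^ 2 ≤ (‖g k‖ + L * (α k * ‖g k‖)) ^ 2 := by
      have hnn : (0:ℝ) ≤ ‖g (k + 1)‖ := norm_nonneg _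
      nlinarith [norm_nonneg (g k), mul_nonneg (mul_nonneg hL.le (hα_nonneg k)) (norm_nonneg (g k))]
    simp only [hu, hδdef]
    nlinarith [h3]
  -- tails of δ
  set T : ℕ → ℝ := fun k => ∑' j, δ (j + k) with hTdef
  have hT0 : Tendsto T atTop (𝓝 0) := tendsto_sum_nat_add δ
  have hT_nonneg : ∀ k, 0 ≤ T k := fun k => tsum_nonneg fun j => hδ_nonneg _
  have hTrec : ∀ k, T k = δ k + T (k + 1) := by
    intro k
    have hs : Summable fun j => δ (j + k) := (summable_nat_add_iff k).2 hδ_sum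
    have := Summable.tsum_eq_zero_add hs
    simp only [zero_add] at this
    rw [hTdef]
    simp only
    rw [this]
    congr 1
    apply tsum_congr
    intro j
    congr 1
    omega
  have hmono : Antitone fun k => u k + T k := by
    refine antitone_nat_of_succ_le fun k => ?_
    have := hkey k
    have := hTrec k
    linarith
  have hbdd2 : BddBelow (Set.range fun k => u k + T k) := by
    refine ⟨0, ?_⟩; rintro _ ⟨k, rfl⟩
    exact add_nonneg (hu_nonneg k) (hT_nonneg k)
  set c' : ℝ := ⨅ k, (u k + T k) with hc'def
  have huT : Tendsto (fun k => u k + T k) atTop (𝓝 c') := tendsto_atTop_ciInf hmono hbdd2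
  have hu_tendsto : Tendsto u atTop (𝓝 c') := by
    have := huT.sub hT0
    simpa using this
  -- c' = 0
  have hc'_nonneg : 0 ≤ c' := ge_of_tendsto' hu_tendsto hu_nonneg |>.trans_eq rfl
  have hc'_le : c' ≤ 0 := by
    by_contra hpos
    push_neg at hpos
    have hev : ∀ᶠ k in atTop, c' / 2 ≤ u k :=
      hu_tendsto.eventually (eventually_ge_nhds (by linarith))
    obtain ⟨M, hM⟩ := eventually_atTop.1 hev
    have hsumα : Summable α := by
      refine (summable_nat_add_iff M).1 ?_
      refine Summable.of_nonneg_of_le (fun k => hα_nonneg _)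
        (fun k => ?_) (((summable_nat_add_iff M).2 hsum_αu).mul_left (2 / c'))
      have h1 := hM (k + M) (Nat.le_add_left _ _)
      have h2 := hα_nonneg (k + M)
      have : c' / 2 * α (k + M) ≤ u (k + M) * α (k + M) :=
        mul_le_mul_of_nonneg_right h1 h2
      rw [div_mul_eq_mul_div, le_div_iff₀ (by linarith : (0:ℝ) < c')] at *
      nlinarith
    exact not_tendsto_atTop_of_tendsto_nhds hsumα.hasSum.tendsto_sum_nat hα_div
  have hc'0 : c' = 0 := le_antisymm hc'_le hc'_nonneg
  rw [hc'0] at hu_tendsto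
  constructor
  · have h1 : Tendsto (fun k => Real.sqrt (u k)) atTop (𝓝 0) := by
      have := (Real.continuous_sqrt.tendsto 0).comp hu_tendsto
      simpa [Function.comp_def] using this
    refine h1.congr fun k => ?_
    simp only [hu]
    exact Real.sqrt_sq (norm_nonneg _)
  · exact ⟨_, hfconv⟩
end

section
/- Let (b_k) be a sequence of nonnegative real numbers and (α_k) a sequence of nonnegative real numbers such that ∑_{k=0}^∞ α_k = ∞, ∑_{k=0}^∞ α_k · b_k² < ∞, and |b_{k+1} - b_k| ≤ C · α_k · b_k for all k, for some constant C > 0. Then lim_{k→∞} b_k = 0. -/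
open Filter Topology

/-- **Real-sequence lemma.** If `b k ≥ 0`, `α k ≥ 0`, `∑ α k = ∞`,
`∑ α k * (b k)^2 < ∞` and `|b (k+1) - b k| ≤ C * α k * b k` for some `C > 0`,
then `b k → 0`. -/
theorem sequence_tendsto_zero_of_weighted_sq_summable
    (b α : ℕ → ℝ) (C : ℝ) (hC : 0 < C)
    (hb_nonneg : ∀ k, 0 ≤ b k) (hα_nonneg : ∀ k, 0 ≤ α k)
    (hα_div : Tendsto (fun n => ∑ k ∈ Finset.range n, α k) atTop atTop)
    (hsum : Summable fun k => α k * (b k) ^ 2)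
    (hdiff : ∀ k, |b (k + 1) - b k| ≤ C * α k * b k) :
    Tendsto b atTop (𝓝 0) := by
  by_contra hnot
  rw [Metric.tendsto_atTop] at hnot
  push_neg at hnot
  obtain ⟨ε, hε, hfreq⟩ := hnot
  have hfreq' : ∀ N, ∃ n, N ≤ n ∧ ε ≤ b n := by
    intro N
    obtain ⟨n, hn, h⟩ := hfreq N
    exact ⟨n, hn, by simpa [Real.dist_eq, abs_of_nonneg (hb_nonneg n)] using h⟩
  set f : ℕ → ℝ := fun k => α k * b k ^ 2 with hf
  have hf_nonneg : ∀ k, 0 ≤ f k := fun k => mul_nonneg (hα_nonneg k) (sq_nonneg _)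
  set L := ∑' k, f k with hLdef
  have hL_nonneg : 0 ≤ L := tsum_nonneg hf_nonneg
  have hS : Tendsto (fun n => ∑ k ∈ Finset.range n, f k) atTop (𝓝 L) :=
    hsum.hasSum.tendsto_sum_nat
  have hSle : ∀ n, ∑ k ∈ Finset.range n, f k ≤ L := fun n =>
    Summable.sum_le_tsum (Finset.range n) (fun i _ => hf_nonneg i) hsum
  have hSmono : ∀ {m n : ℕ}, m ≤ n →
      ∑ k ∈ Finset.range m, f k ≤ ∑ k ∈ Finset.range n, f k := by
    intro m n hmn
    exact Finset.sum_le_sum_of_subset_of_nonneg (Finset.range_subset_range.2 hmn)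
      (fun i _ _ => hf_nonneg i)
  -- Since ∑ α = ∞ and ∑ α b² < ∞, b drops below ε/2 infinitely often.
  have hsmall : ∀ N, ∃ m, N ≤ m ∧ b m ≤ ε / 2 := by
    intro N
    by_contra hcon
    push_neg at hcon
    have hbound : ∀ n, ∑ k ∈ Finset.range n, α k ≤
        ∑ k ∈ Finset.range N, α k + (4 / ε ^ 2) * L := by
      intro n
      rcases le_total n N with h | h
      · have h1 : ∑ k ∈ Finset.range n, α k ≤ ∑ k ∈ Finset.range N, α k :=
          Finset.sum_le_sum_of_subset_of_nonneg (Finset.range_subset_range.2 h)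
            (fun i _ _ => hα_nonneg i)
        have h2 : 0 ≤ (4 / ε ^ 2) * L :=
          mul_nonneg (by positivity) hL_nonneg
        linarith
      · have hsplit : ∑ k ∈ Finset.range n, α k =
            ∑ k ∈ Finset.range N, α k + ∑ k ∈ Finset.Ico N n, α k := by
          rw [Finset.range_eq_Ico, Finset.range_eq_Ico]
          exact (Finset.sum_Ico_consecutive _ (Nat.zero_le N) h).symm
        have hterm : ∀ k ∈ Finset.Ico N n, α k ≤ (4 / ε ^ 2) * f k := by
          intro k hk
          have hkN : N ≤ k := (Finset.mem_Ico.1 hk).1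
          have hbk : ε / 2 < b k := hcon k hkN
          have : f k = α k * b k ^ 2 := rfl
          have hε2 : (0:ℝ) < ε ^ 2 := by positivity
          rw [this]
          rw [div_mul_eq_mul_div, le_div_iff₀ hε2]
          have hsq : ε ^ 2 / 4 ≤ b k ^ 2 := by nlinarith
          nlinarith [mul_le_mul_of_nonneg_left hsq (hα_nonneg k)]
        have h3 : ∑ k ∈ Finset.Ico N n, α k ≤
            ∑ k ∈ Finset.Ico N n, (4 / ε ^ 2) * f k :=
          Finset.sum_le_sum hterm
        have h4 : ∑ k ∈ Finset.Ico N n, f k ≤ L := by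
          calc ∑ k ∈ Finset.Ico N n, f k ≤ ∑ k ∈ Finset.range n, f k := by
                rw [Finset.range_eq_Ico]
                exact Finset.sum_le_sum_of_subset_of_nonneg
                  (Finset.Ico_subset_Ico (Nat.zero_le N) le_rfl)
                  (fun i _ _ => hf_nonneg i)
            _ ≤ L := hSle n
        rw [← Finset.mul_sum] at h3
        have h5 : (4 / ε ^ 2) * ∑ k ∈ Finset.Ico N n, f k ≤ (4 / ε ^ 2) * L :=
          mul_le_mul_of_nonneg_left h4 (by positivity)
        linarith
    obtain ⟨n, hn⟩ :=
      (hα_div.eventually_gt_atTop (∑ k ∈ Finset.range N, α k + (4 / ε ^ 2) * L)).exists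
    exact absurd (hbound n) (not_le.2 hn)
  -- choose a tail of the series smaller than ε²/(8C)
  have hδ : (0:ℝ) < ε ^ 2 / (8 * C) := by positivity
  obtain ⟨N1, hN1⟩ : ∃ N1, L - ε ^ 2 / (8 * C) < ∑ k ∈ Finset.range N1, f k := by
    have : Set.Ioi (L - ε ^ 2 / (8 * C)) ∈ 𝓝 L := Ioi_mem_nhds (by linarith)
    exact (hS.eventually this).exists
  obtain ⟨n, hnN1, hbn⟩ := hfreq' N1
  obtain ⟨m, hm, hbm⟩ := hsmall n
  -- least j with b (n + j) ≤ ε/2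
  have hP : ∃ j, b (n + j) ≤ ε / 2 := ⟨m - n, by rwa [Nat.add_sub_cancel' hm]⟩
  set M := Nat.find hP with hMdef
  have hbM : b (n + M) ≤ ε / 2 := Nat.find_spec hP
  have hmid : ∀ j < M, ε / 2 < b (n + j) := fun j hj =>
    lt_of_not_ge (Nat.find_min hP hj)
  -- telescoping
  have tele : b n - b (n + M) = ∑ j ∈ Finset.range M, (b (n + j) - b (n + j + 1)) := by
    have h := Finset.sum_range_sub' (fun j => b (n + j)) M
    simpa [add_assoc] using h.symm
  have hstep : ∀ j ∈ Finset.range M,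
      b (n + j) - b (n + j + 1) ≤ (2 * C / ε) * f (n + j) := by
    intro j hj
    have hj' := Finset.mem_range.1 hj
    have hbj : ε / 2 < b (n + j) := hmid j hj'
    have h1 : b (n + j) - b (n + j + 1) ≤ C * α (n + j) * b (n + j) := by
      have := hdiff (n + j)
      have habs : |b (n + j) - b (n + j + 1)| = |b (n + j + 1) - b (n + j)| :=
        abs_sub_comm _ _
      calc b (n + j) - b (n + j + 1) ≤ |b (n + j) - b (n + j + 1)| := le_abs_self _
        _ = |b (n + j + 1) - b (n + j)| := habs
        _ ≤ C * α (n + j) * b (n + j) := this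
    have h2 : C * α (n + j) * b (n + j) ≤ (2 * C / ε) * (α (n + j) * b (n + j) ^ 2) := by
      rw [div_mul_eq_mul_div, le_div_iff₀ hε]
      have hpos : 0 ≤ C * α (n + j) * b (n + j) :=
        mul_nonneg (mul_nonneg hC.le (hα_nonneg (n + j))) (hb_nonneg (n + j))
      nlinarith [mul_nonneg hpos (by linarith : (0:ℝ) ≤ 2 * b (n + j) - ε)]
    exact h1.trans h2
  have hsum_tail : ∑ j ∈ Finset.range M, f (n + j) < ε ^ 2 / (8 * C) := by
    have heq : ∑ k ∈ Finset.range (n + M), f k =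
        ∑ k ∈ Finset.range n, f k + ∑ j ∈ Finset.range M, f (n + j) :=
      Finset.sum_range_add f n M
    have h1 : ∑ k ∈ Finset.range N1, f k ≤ ∑ k ∈ Finset.range n, f k := hSmono hnN1
    have h2 : ∑ k ∈ Finset.range (n + M), f k ≤ L := hSle _
    linarith
  have hbig : ε / 2 ≤ b n - b (n + M) := by linarith
  have hfin : b n - b (n + M) ≤ (2 * C / ε) * ∑ j ∈ Finset.range M, f (n + j) := by
    rw [tele]
    calc ∑ j ∈ Finset.range M, (b (n + j) - b (n + j + 1))
        ≤ ∑ j ∈ Finset.range M, (2 * C / ε) * f (n + j) := Finset.sum_le_sum hstep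
      _ = (2 * C / ε) * ∑ j ∈ Finset.range M, f (n + j) := by rw [Finset.mul_sum]
  have hCε : (0:ℝ) < 2 * C / ε := by positivity
  have : (2 * C / ε) * ∑ j ∈ Finset.range M, f (n + j) <
      (2 * C / ε) * (ε ^ 2 / (8 * C)) :=
    mul_lt_mul_of_pos_left hsum_tail hCε
  have hcalc : (2 * C / ε) * (ε ^ 2 / (8 * C)) = ε / 4 := by
    field_simp
    ring
  linarith
end

section
/- Let n ≥ 1, let ℓ ∈ ℝ^n, and let τ ≥ 0, γ ≥ 0. Define E : ℝ^n → ℝ by E(v) = ∑_{j=1}^n v_j ℓ_j - τ · ∑_{j=1}^n v_j - γ · (∑_{j=1}^n v_j²)^{1/2}. Then E attains its minimum over the cube [0,1]^n at some binary point: there exists v* ∈ {0,1}^n such that E(v*) ≤ E(u) for all u ∈ [0,1]^n. -/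
lemma sqrt_aux {c l : ℝ} (hc : 0 ≤ c) (h0 : 0 ≤ l) (h1 : l ≤ 1) :
    Real.sqrt (l ^ 2 + c) ≤ (1 - l) * Real.sqrt c + l * Real.sqrt (1 + c) := by
  have hs : Real.sqrt c ^ 2 = c := Real.sq_sqrt hc
  have ht : Real.sqrt (1 + c) ^ 2 = 1 + c := Real.sq_sqrt (by linarith)
  have hs0 : 0 ≤ Real.sqrt c := Real.sqrt_nonneg _
  have ht0 : 0 ≤ Real.sqrt (1 + c) := Real.sqrt_nonneg _
  have hst : Real.sqrt c ≤ Real.sqrt (1 + c) := Real.sqrt_le_sqrt (by linarith)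
  have hrhs : 0 ≤ (1 - l) * Real.sqrt c + l * Real.sqrt (1 + c) :=
    add_nonneg (mul_nonneg (by linarith) hs0) (mul_nonneg h0 ht0)
  have hcst : c ≤ Real.sqrt c * Real.sqrt (1 + c) := by nlinarith
  calc Real.sqrt (l ^ 2 + c)
      ≤ Real.sqrt (((1 - l) * Real.sqrt c + l * Real.sqrt (1 + c)) ^ 2) := by
        apply Real.sqrt_le_sqrt
        nlinarith [mul_nonneg (mul_nonneg h0 (by linarith : (0:ℝ) ≤ 1 - l))
          (sub_nonneg.mpr hcst)]
    _ = (1 - l) * Real.sqrt c + l * Real.sqrt (1 + c) := Real.sqrt_sq hrhs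

/-- The self-paced learning objective for one training image: weighted loss plus the
self-paced regularizer `f(v; τ, γ) = -τ‖v‖₁ - γ‖v‖₂` (easiness plus diversity term),
evaluated at latent weights `v ∈ [0,1]^n` with pixel losses `ℓ`. -/
noncomputable def splObjective {n : ℕ} (ℓ : Fin n → ℝ) (τ γ : ℝ) (v : Fin n → ℝ) : ℝ :=
  (∑ j, v j * ℓ j) - τ * (∑ j, v j) - γ * Real.sqrt (∑ j, (v j) ^ 2)

lemma sum_update_fun {n : ℕ} (u : Fin n → ℝ) (k : Fin n) (t : ℝ) (F : Fin n → ℝ → ℝ) :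
    ∑ i, F i (Function.update u k t i)
      = F k t + ∑ i ∈ Finset.univ.erase k, F i (u i) := by
  rw [← Finset.add_sum_erase _ _ (Finset.mem_univ k), Function.update_self]
  congr 1
  apply Finset.sum_congr rfl
  intro i hi
  rw [Function.update_of_ne (Finset.ne_of_mem_erase hi)]

lemma spl_update {n : ℕ} (ℓ : Fin n → ℝ) (τ γ : ℝ) (u : Fin n → ℝ) (k : Fin n) (t : ℝ) :
    splObjective ℓ τ γ (Function.update u k t)
      = (t * ℓ k + ∑ i ∈ Finset.univ.erase k, u i * ℓ i)
        - τ * (t + ∑ i ∈ Finset.univ.erase k, u i)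
        - γ * Real.sqrt (t ^ 2 + ∑ i ∈ Finset.univ.erase k, (u i) ^ 2) := by
  unfold splObjective
  rw [sum_update_fun u k t (fun i x => x * ℓ i), sum_update_fun u k t (fun _ x => x),
    sum_update_fun u k t (fun _ x => x ^ 2)]

/-- Rounding one coordinate of `u` to `0` or `1` does not increase the objective. -/
lemma round_coord {n : ℕ} (ℓ : Fin n → ℝ) (τ γ : ℝ) (hγ : 0 ≤ γ)
    (u : Fin n → ℝ) (hu : ∀ j, u j ∈ Set.Icc (0 : ℝ) 1) (k : Fin n) :
    ∃ t : ℝ, (t = 0 ∨ t = 1) ∧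
      splObjective ℓ τ γ (Function.update u k t) ≤ splObjective ℓ τ γ u := by
  set C := ∑ i ∈ Finset.univ.erase k, (u i) ^ 2 with hC
  have hC0 : 0 ≤ C := Finset.sum_nonneg fun i _ => sq_nonneg _
  set l := u k with hl
  obtain ⟨h0, h1⟩ := hu k
  set g : ℝ → ℝ := fun t => splObjective ℓ τ γ (Function.update u k t) with hg
  have hgu : g l = splObjective ℓ τ γ u := by rw [hg]; simp [hl, Function.update_eq_self]
  have key : (1 - l) * g 0 + l * g 1 ≤ g l := by
    have e0 : ((0:ℝ)) ^ 2 + C = C := by ring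
    have e1 : ((1:ℝ)) ^ 2 + C = 1 + C := by ring
    simp only [hg, spl_update, e0, e1]
    have := sqrt_aux hC0 h0 h1
    rw [← hl] at this
    rw [← hC, e0, e1]
    nlinarith [mul_le_mul_of_nonneg_left this hγ]
  rcases le_total (g 0) (g 1) with h | h
  · exact ⟨0, Or.inl rfl, by rw [← hgu]; nlinarith⟩
  · exact ⟨1, Or.inr rfl, by rw [← hgu]; nlinarith⟩

/-- Rounding all coordinates in a finite set `s` to binary values. -/
lemma round_finset {n : ℕ} (ℓ : Fin n → ℝ) (τ γ : ℝ) (hγ : 0 ≤ γ)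
    (s : Finset (Fin n)) :
    ∀ u : Fin n → ℝ, (∀ j, u j ∈ Set.Icc (0 : ℝ) 1) →
      ∃ v : Fin n → ℝ, (∀ j, v j ∈ Set.Icc (0 : ℝ) 1) ∧
        (∀ j ∈ s, v j = 0 ∨ v j = 1) ∧ (∀ j ∉ s, v j = u j) ∧
        splObjective ℓ τ γ v ≤ splObjective ℓ τ γ u := by
  induction s using Finset.induction with
  | empty =>
    intro u hu
    exact ⟨u, hu, by simp, fun _ _ => rfl, le_refl _⟩
  | @insert k s hk ih =>
    intro u hu
    obtain ⟨t, htb, hle⟩ := round_coord ℓ τ γ hγ u hu k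
    set u' := Function.update u k t with hu'
    have hu'cube : ∀ j, u' j ∈ Set.Icc (0 : ℝ) 1 := by
      intro j
      rcases eq_or_ne j k with rfl | hne
      · simp only [hu', Function.update_self]
        rcases htb with rfl | rfl <;> constructor <;> norm_num
      · simpa [hu', Function.update_of_ne hne] using hu j
    obtain ⟨v, hvcube, hvbin, hvoff, hvle⟩ := ih u' hu'cube
    refine ⟨v, hvcube, ?_, ?_, hvle.trans hle⟩
    · intro j hj
      rcases Finset.mem_insert.mp hj with rfl | hj'
      · rw [hvoff j hk]; simpa [hu'] using htb
      · exact hvbin j hj'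
    · intro j hj
      have hjs : j ∉ s := fun h => hj (Finset.mem_insert_of_mem h)
      have hjk : j ≠ k := fun h => hj (h ▸ Finset.mem_insert_self k s)
      rw [hvoff j hjs, hu', Function.update_of_ne hjk]

/-- **The latent-weight subproblem (Eq. (5)) has a binary minimizer.** The concave
objective `E(v) = ∑ v_j ℓ_j - τ ∑ v_j - γ (∑ v_j²)^{1/2}` attains its minimum over the
cube `[0,1]^n` at some binary point `v* ∈ {0,1}^n`. -/
theorem splObjective_exists_binary_minimizer
    (n : ℕ) (hn : 1 ≤ n) (ℓ : Fin n → ℝ) (τ γ : ℝ) (hτ : 0 ≤ τ) (hγ : 0 ≤ γ) :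
    ∃ v : Fin n → ℝ, (∀ j, v j = 0 ∨ v j = 1) ∧
      ∀ u : Fin n → ℝ, (∀ j, u j ∈ Set.Icc (0 : ℝ) 1) →
        splObjective ℓ τ γ v ≤ splObjective ℓ τ γ u := by
  classical
  set toV : (Fin n → Bool) → (Fin n → ℝ) := fun b j => if b j then 1 else 0 with htoV
  obtain ⟨b₀, -, hb₀⟩ := Finset.exists_min_image (Finset.univ : Finset (Fin n → Bool))
    (fun b => splObjective ℓ τ γ (toV b)) ⟨fun _ => false, Finset.mem_univ _⟩
  refine ⟨toV b₀, fun j => by by_cases h : b₀ j <;> simp [htoV, h], ?_⟩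
  intro u hu
  obtain ⟨w, -, hwbin, -, hwle⟩ :=
    round_finset ℓ τ γ hγ (Finset.univ : Finset (Fin n)) u hu
  have hwbin' : ∀ j, w j = 0 ∨ w j = 1 := fun j => hwbin j (Finset.mem_univ j)
  set b : Fin n → Bool := fun j => decide (w j = 1) with hb
  have hwb : toV b = w := by
    funext j
    rcases hwbin' j with h | h <;> simp [htoV, hb, h]
  calc splObjective ℓ τ γ (toV b₀) ≤ splObjective ℓ τ γ (toV b) := hb₀ b (Finset.mem_univ _)
    _ = splObjective ℓ τ γ w := by rw [hwb]
    _ ≤ splObjective ℓ τ γ u := hwle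
end

section
/- Let n ≥ 1, let τ > 0 and γ > 0, and let ℓ ∈ ℝ^n be sorted in ascending order: ℓ_1 ≤ ℓ_2 ≤ ⋯ ≤ ℓ_n. Define v* ∈ {0,1}^n by v*_j = 1 if ℓ_j < τ + γ / (√j + √(j-1)) and v*_j = 0 otherwise (j = 1, …, n, with the convention √0 = 0). Then v* is a global minimizer over [0,1]^n of the function E(v) = ∑_{j=1}^n v_j ℓ_j - τ · ∑_{j=1}^n v_j - γ · (∑_{j=1}^n v_j²)^{1/2}, i.e. E(v*) ≤ E(u) for all u ∈ [0,1]^n. -/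
/-- The SPLD thresholding rule: the pixel of rank `o = j + 1` (for `j : Fin n`, so the
rank runs over `1, …, n` with losses sorted in ascending order) is selected (weight `1`)
exactly when its loss is below the threshold `τ + γ / (√o + √(o - 1))`, and excluded
(weight `0`) otherwise. -/
noncomputable def spldWeights {n : ℕ} (ℓ : Fin n → ℝ) (τ γ : ℝ) : Fin n → ℝ :=
  fun j =>
    if ℓ j < τ + γ / (Real.sqrt ((j : ℕ) + 1) + Real.sqrt ((j : ℕ))) then 1 else 0

namespace SPLDAux

open Finset

/-- Threshold at rank `m+1`. -/
noncomputable def thresh (τ γ : ℝ) (m : ℕ) : ℝ :=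
  τ + γ / (Real.sqrt ((m : ℝ) + 1) + Real.sqrt (m : ℝ))

lemma sqrt_add_pos (m : ℕ) : 0 < Real.sqrt ((m : ℝ) + 1) + Real.sqrt (m : ℝ) := by
  have h1 : (0 : ℝ) < Real.sqrt ((m : ℝ) + 1) := Real.sqrt_pos.mpr (by positivity)
  have h2 := Real.sqrt_nonneg (m : ℝ)
  linarith

lemma thresh_anti (τ γ : ℝ) (hγ : 0 ≤ γ) {a b : ℕ} (hab : a ≤ b) :
    thresh τ γ b ≤ thresh τ γ a := by
  unfold thresh
  have ha := sqrt_add_pos a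
  have hab' : (a : ℝ) ≤ (b : ℝ) := by exact_mod_cast hab
  have h1 : Real.sqrt ((a : ℝ) + 1) + Real.sqrt (a : ℝ)
      ≤ Real.sqrt ((b : ℝ) + 1) + Real.sqrt (b : ℝ) := by
    have := Real.sqrt_le_sqrt (show (a : ℝ) + 1 ≤ (b : ℝ) + 1 by linarith)
    have := Real.sqrt_le_sqrt hab'
    linarith
  have := div_le_div_of_nonneg_left hγ ha h1
  linarith

lemma sqrt_succ_sub (m : ℕ) :
    Real.sqrt ((m : ℝ) + 1) - Real.sqrt (m : ℝ)
      = 1 / (Real.sqrt ((m : ℝ) + 1) + Real.sqrt (m : ℝ)) := by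
  have hd := sqrt_add_pos m
  rw [eq_div_iff (ne_of_gt hd)]
  have h1 : Real.sqrt ((m : ℝ) + 1) ^ 2 = (m : ℝ) + 1 := Real.sq_sqrt (by positivity)
  have h2 : Real.sqrt (m : ℝ) ^ 2 = (m : ℝ) := Real.sq_sqrt (by positivity)
  nlinarith

/-- Value of the objective at the indicator of the first `m` indices. -/
noncomputable def gval (ℓ' : ℕ → ℝ) (τ γ : ℝ) (m : ℕ) : ℝ :=
  (∑ i ∈ Finset.range m, ℓ' i) - τ * m - γ * Real.sqrt m

lemma gval_succ (ℓ' : ℕ → ℝ) (τ γ : ℝ) (m : ℕ) :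
    gval ℓ' τ γ (m + 1) = gval ℓ' τ γ m + (ℓ' m - thresh τ γ m) := by
  unfold gval thresh
  rw [Finset.sum_range_succ]
  have hs := sqrt_succ_sub m
  have hd := sqrt_add_pos m
  push_cast
  have h1 : (Real.sqrt ((m : ℝ) + 1) - Real.sqrt (m : ℝ))
      * (Real.sqrt ((m : ℝ) + 1) + Real.sqrt (m : ℝ)) = 1 := by
    rw [hs]
    field_simp
  have : γ * Real.sqrt ((m : ℝ) + 1) - γ * Real.sqrt (m : ℝ)
      = γ / (Real.sqrt ((m : ℝ) + 1) + Real.sqrt (m : ℝ)) := by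
    rw [eq_div_iff (ne_of_gt hd)]
    linear_combination γ * h1
  linarith [this]

lemma gval_le_of_le_k (ℓ' : ℕ → ℝ) (τ γ : ℝ) (k : ℕ)
    (hlow : ∀ m < k, ℓ' m < thresh τ γ m) :
    ∀ a b : ℕ, a ≤ b → b ≤ k → gval ℓ' τ γ b ≤ gval ℓ' τ γ a := by
  intro a b
  induction b with
  | zero =>
      intro h1 _
      have : a = 0 := by omega
      rw [this]
  | succ b ih =>
      intro hab hbk
      rcases Nat.lt_or_ge a (b + 1) with h | h
      · have hab' : a ≤ b := by omega
        have hbk' : b ≤ k := by omega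
        have hb : b < k := by omega
        have := hlow b hb
        have hstep := gval_succ ℓ' τ γ b
        have := ih hab' hbk'
        linarith
      · have : a = b + 1 := by omega
        rw [this]

lemma gval_ge_of_ge_k (ℓ' : ℕ → ℝ) (τ γ : ℝ) (k N : ℕ)
    (hhigh : ∀ m, k ≤ m → m < N → thresh τ γ m ≤ ℓ' m) :
    ∀ b : ℕ, k ≤ b → b ≤ N → gval ℓ' τ γ k ≤ gval ℓ' τ γ b := by
  intro b
  induction b with
  | zero => intro h1 _; have : k = 0 := by omega
            rw [this]
  | succ b ih =>
      intro hkb hbN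
      rcases Nat.lt_or_ge k (b + 1) with h | h
      · have hkb' : k ≤ b := by omega
        have hbN' : b ≤ N := by omega
        have hb : b < N := by omega
        have := hhigh b hkb' hb
        have hstep := gval_succ ℓ' τ γ b
        have := ih hkb' hbN'
        linarith
      · have : k = b + 1 := by omega
        rw [this]

/-- Convexity of `t ↦ √(t² + S)` on `[0,1]`, in the form of the chord inequality. -/
lemma sqrt_sq_add_le (S t : ℝ) (hS : 0 ≤ S) (ht0 : 0 ≤ t) (ht1 : t ≤ 1) :
    Real.sqrt (t ^ 2 + S) ≤ (1 - t) * Real.sqrt S + t * Real.sqrt (1 + S) := by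
  rw [Real.sqrt_le_iff]
  have h1t : 0 ≤ 1 - t := by linarith
  have hsS := Real.sqrt_nonneg S
  have hs1S := Real.sqrt_nonneg (1 + S)
  constructor
  · have := mul_nonneg h1t hsS
    have := mul_nonneg ht0 hs1S
    linarith
  · have hs : Real.sqrt S ^ 2 = S := Real.sq_sqrt hS
    have hs1 : Real.sqrt (1 + S) ^ 2 = 1 + S := Real.sq_sqrt (by linarith)
    have hgeS : S ≤ Real.sqrt S * Real.sqrt (1 + S) := by
      rw [← Real.sqrt_mul hS]
      have h0 : Real.sqrt (S * S) ≤ Real.sqrt (S * (1 + S)) :=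
        Real.sqrt_le_sqrt (by nlinarith)
      rwa [show S * S = S ^ 2 by ring, Real.sqrt_sq hS] at h0
    nlinarith [mul_nonneg (mul_nonneg ht0 h1t) (sub_nonneg.mpr hgeS)]

/-- Rounding one coordinate to an endpoint does not increase the objective. -/
lemma round_coord {n : ℕ} (ℓ : Fin n → ℝ) (τ γ : ℝ) (hγ : 0 ≤ γ)
    (u : Fin n → ℝ) (hu : ∀ j, u j ∈ Set.Icc (0 : ℝ) 1) (i : Fin n) :
    splObjective ℓ τ γ (Function.update u i 0) ≤ splObjective ℓ τ γ u ∨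
    splObjective ℓ τ γ (Function.update u i 1) ≤ splObjective ℓ τ γ u := by
  classical
  set P : ℝ := ∑ j ∈ univ.erase i, u j * ℓ j with hP
  set Q : ℝ := ∑ j ∈ univ.erase i, u j with hQ
  set S : ℝ := ∑ j ∈ univ.erase i, (u j) ^ 2 with hS
  have hSnn : 0 ≤ S := Finset.sum_nonneg fun j _ => sq_nonneg _
  have key : ∀ t : ℝ, splObjective ℓ τ γ (Function.update u i t)
      = (t * ℓ i + P) - τ * (t + Q) - γ * Real.sqrt (t ^ 2 + S) := by
    intro t
    unfold splObjective
    have e1 : (∑ j, Function.update u i t j * ℓ j) = t * ℓ i + P := by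
      rw [← Finset.add_sum_erase _ _ (Finset.mem_univ i)]
      simp only [Function.update_self]
      congr 1
      refine Finset.sum_congr rfl fun j hj => ?_
      rw [Function.update_of_ne (Finset.ne_of_mem_erase hj)]
    have e2 : (∑ j, Function.update u i t j) = t + Q := by
      rw [← Finset.add_sum_erase _ _ (Finset.mem_univ i)]
      simp only [Function.update_self]
      congr 1
      refine Finset.sum_congr rfl fun j hj => ?_
      rw [Function.update_of_ne (Finset.ne_of_mem_erase hj)]
    have e3 : (∑ j, (Function.update u i t j) ^ 2) = t ^ 2 + S := by
      rw [← Finset.add_sum_erase _ _ (Finset.mem_univ i)]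
      simp only [Function.update_self]
      congr 1
      refine Finset.sum_congr rfl fun j hj => ?_
      rw [Function.update_of_ne (Finset.ne_of_mem_erase hj)]
    rw [e1, e2, e3]
  set t : ℝ := u i with htdef
  have ht0 : 0 ≤ t := (hu i).1
  have ht1 : t ≤ 1 := (hu i).2
  have hEu : splObjective ℓ τ γ u
      = (t * ℓ i + P) - τ * (t + Q) - γ * Real.sqrt (t ^ 2 + S) := by
    have := key t
    rwa [htdef, Function.update_eq_self] at this
  have hE0 : splObjective ℓ τ γ (Function.update u i 0)
      = P - τ * Q - γ * Real.sqrt S := by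
    rw [key 0]; norm_num
  have hE1 : splObjective ℓ τ γ (Function.update u i 1)
      = (ℓ i + P) - τ * (1 + Q) - γ * Real.sqrt (1 + S) := by
    rw [key 1]; norm_num
  have hsqrt := sqrt_sq_add_le S t hSnn ht0 ht1
  have hcomb : (1 - t) * splObjective ℓ τ γ (Function.update u i 0)
      + t * splObjective ℓ τ γ (Function.update u i 1) ≤ splObjective ℓ τ γ u := by
    rw [hE0, hE1, hEu]
    nlinarith [mul_le_mul_of_nonneg_left hsqrt hγ]
  rcases le_total (splObjective ℓ τ γ (Function.update u i 0))
      (splObjective ℓ τ γ (Function.update u i 1)) with h | h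
  · left
    nlinarith [mul_le_mul_of_nonneg_left h ht0]
  · right
    nlinarith [mul_le_mul_of_nonneg_left h (show 0 ≤ 1 - t by linarith)]

/-- Any point of the cube is dominated by a binary point. -/
lemma exists_binary {n : ℕ} (ℓ : Fin n → ℝ) (τ γ : ℝ) (hγ : 0 ≤ γ) :
    ∀ (m : ℕ) (u : Fin n → ℝ), (∀ j, u j ∈ Set.Icc (0 : ℝ) 1) →
      (Finset.univ.filter (fun j => u j ≠ 0 ∧ u j ≠ 1)).card ≤ m →
      ∃ w : Fin n → ℝ, (∀ j, w j = 0 ∨ w j = 1) ∧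
        splObjective ℓ τ γ w ≤ splObjective ℓ τ γ u := by
  classical
  intro m
  induction m with
  | zero =>
      intro u hu hc
      refine ⟨u, fun j => ?_, le_refl _⟩
      by_contra h
      push_neg at h
      have hj : j ∈ Finset.univ.filter (fun j => u j ≠ 0 ∧ u j ≠ 1) := by
        simp [h.1, h.2]
      have := Finset.card_eq_zero.mp (Nat.le_zero.mp hc)
      rw [this] at hj
      exact absurd hj (Finset.notMem_empty j)
  | succ m ih =>
      intro u hu hc
      by_cases hB : ∀ j, u j = 0 ∨ u j = 1
      · exact ⟨u, hB, le_refl _⟩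
      · push_neg at hB
        obtain ⟨i, hi0, hi1⟩ := hB
        have hiF : i ∈ Finset.univ.filter (fun j => u j ≠ 0 ∧ u j ≠ 1) := by
          simp [hi0, hi1]
        have hstep : ∀ c : ℝ, (c = 0 ∨ c = 1) →
            splObjective ℓ τ γ (Function.update u i c) ≤ splObjective ℓ τ γ u →
            ∃ w : Fin n → ℝ, (∀ j, w j = 0 ∨ w j = 1) ∧
              splObjective ℓ τ γ w ≤ splObjective ℓ τ γ u := by
          intro c hc01 hle
          set u' := Function.update u i c with hu'
          have hu'mem : ∀ j, u' j ∈ Set.Icc (0 : ℝ) 1 := by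
            intro j
            by_cases hj : j = i
            · subst hj
              rcases hc01 with h | h <;>
                simp [hu', h, Set.mem_Icc]
            · rw [hu', Function.update_of_ne hj]; exact hu j
          have hsub : Finset.univ.filter (fun j => u' j ≠ 0 ∧ u' j ≠ 1)
              ⊆ (Finset.univ.filter (fun j => u j ≠ 0 ∧ u j ≠ 1)).erase i := by
            intro x hx
            rw [Finset.mem_filter] at hx
            have hxne : x ≠ i := by
              intro hxi
              subst hxi
              rcases hc01 with h | h
              · exact hx.2.1 (by simp [hu', h])
              · exact hx.2.2 (by simp [hu', h])
            rw [Finset.mem_erase]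
            refine ⟨hxne, ?_⟩
            rw [Finset.mem_filter]
            have : u' x = u x := by rw [hu', Function.update_of_ne hxne]
            rw [this] at hx
            exact ⟨Finset.mem_univ x, hx.2⟩
          have hcard : (Finset.univ.filter (fun j => u' j ≠ 0 ∧ u' j ≠ 1)).card ≤ m := by
            have h1 := Finset.card_le_card hsub
            rw [Finset.card_erase_of_mem hiF] at h1
            have h2 : 1 ≤ (Finset.univ.filter (fun j => u j ≠ 0 ∧ u j ≠ 1)).card :=
              Finset.card_pos.mpr ⟨i, hiF⟩
            omega
          obtain ⟨w, hw, hle'⟩ := ih u' hu'mem hcard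
          exact ⟨w, hw, hle'.trans hle⟩
        rcases round_coord ℓ τ γ hγ u hu i with h | h
        · exact hstep 0 (Or.inl rfl) h
        · exact hstep 1 (Or.inr rfl) h

/-- Value of the objective at a binary vector. -/
lemma binary_value {n : ℕ} (ℓ : Fin n → ℝ) (τ γ : ℝ) (w : Fin n → ℝ)
    (hw : ∀ j, w j = 0 ∨ w j = 1) :
    splObjective ℓ τ γ w =
      (∑ j ∈ Finset.univ.filter (fun j => w j = 1), ℓ j)
        - τ * ((Finset.univ.filter (fun j => w j = 1)).card : ℝ)
        - γ * Real.sqrt ((Finset.univ.filter (fun j => w j = 1)).card : ℝ) := by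
  classical
  unfold splObjective
  have e1 : (∑ j, w j * ℓ j) = ∑ j ∈ Finset.univ.filter (fun j => w j = 1), ℓ j := by
    rw [Finset.sum_filter]
    refine Finset.sum_congr rfl fun j _ => ?_
    rcases hw j with h | h <;> simp [h]
  have e2 : (∑ j, w j) = ((Finset.univ.filter (fun j => w j = 1)).card : ℝ) := by
    rw [Finset.card_filter, Nat.cast_sum]
    refine Finset.sum_congr rfl fun j _ => ?_
    rcases hw j with h | h <;> simp [h]
  have e3 : (∑ j, (w j) ^ 2) = ((Finset.univ.filter (fun j => w j = 1)).card : ℝ) := by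
    rw [Finset.card_filter, Nat.cast_sum]
    refine Finset.sum_congr rfl fun j _ => ?_
    rcases hw j with h | h <;> simp [h]
  rw [e1, e2, e3]

lemma fin_le_apply {m n : ℕ} (f : Fin m → Fin n) (hf : StrictMono f) :
    ∀ v (h : v < m), v ≤ ((f ⟨v, h⟩ : Fin n) : ℕ) := by
  intro v
  induction v with
  | zero => intro h; exact Nat.zero_le _
  | succ v ih =>
      intro h
      have hv : v < m := Nat.lt_of_succ_lt h
      have h1 : f ⟨v, hv⟩ < f ⟨v + 1, h⟩ := hf (by simp [Fin.lt_def])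
      exact Nat.succ_le_of_lt (lt_of_le_of_lt (ih hv) h1)

/-- The extension of `ℓ` to `ℕ`. -/
noncomputable def lext {n : ℕ} (ℓ : Fin n → ℝ) : ℕ → ℝ :=
  fun i => if h : i < n then ℓ ⟨i, h⟩ else 0

/-- With sorted losses, the sum over any set dominates the sum over the initial
segment of the same cardinality. -/
lemma sum_initial_le {n : ℕ} (ℓ : Fin n → ℝ) (hsorted : Monotone ℓ)
    (S : Finset (Fin n)) :
    ∑ i ∈ Finset.range S.card, lext ℓ i ≤ ∑ j ∈ S, ℓ j := by
  classical
  set m := S.card with hm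
  have hmn : m ≤ n := by
    have := Finset.card_le_univ S
    simpa [hm] using this
  set f := S.orderEmbOfFin hm.symm with hf
  have himg : S = Finset.univ.image f := by
    apply Finset.coe_injective
    rw [Finset.coe_image, Finset.coe_univ, Set.image_univ]
    exact (Finset.range_orderEmbOfFin S hm.symm).symm
  have hsum : ∑ j ∈ S, ℓ j = ∑ i : Fin m, ℓ (f i) := by
    rw [himg, Finset.sum_image]
    intro a _ b _ hab
    exact f.injective hab
  rw [hsum, Finset.sum_range]
  refine Finset.sum_le_sum fun i _ => ?_
  have hlt : (i : ℕ) < n := lt_of_lt_of_le i.isLt hmn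
  have hle : (i : ℕ) ≤ ((f ⟨(i : ℕ), i.isLt⟩ : Fin n) : ℕ) :=
    fin_le_apply f f.strictMono (i : ℕ) i.isLt
  have : lext ℓ (i : ℕ) = ℓ ⟨(i : ℕ), hlt⟩ := by
    unfold lext; rw [dif_pos hlt]
  rw [this]
  have heq : f ⟨(i : ℕ), i.isLt⟩ = f i := by congr
  apply hsorted
  rw [Fin.le_def]
  simpa [heq] using hle

/-- Characterization of membership in a down-closed set of `Fin n` by rank. -/
lemma mem_iff_lt_card {n : ℕ} (P : Fin n → Prop) [DecidablePred P]
    (hdown : ∀ j j' : Fin n, j' ≤ j → P j → P j') (j : Fin n) :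
    P j ↔ (j : ℕ) < (Finset.univ.filter P).card := by
  constructor
  · intro hPj
    have hsub : Finset.Iic j ⊆ Finset.univ.filter P := by
      intro x hx
      rw [Finset.mem_Iic] at hx
      rw [Finset.mem_filter]
      exact ⟨Finset.mem_univ x, hdown j x hx hPj⟩
    have := Finset.card_le_card hsub
    rw [Fin.card_Iic] at this
    omega
  · intro hlt
    by_contra hPj
    have hsub : Finset.univ.filter P ⊆ Finset.Iio j := by
      intro x hx
      rw [Finset.mem_filter] at hx
      rw [Finset.mem_Iio]
      by_contra hxj
      push_neg at hxj
      exact hPj (hdown x j hxj hx.2)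
    have := Finset.card_le_card hsub
    rw [Fin.card_Iio] at this
    omega

end SPLDAux

open SPLDAux Finset in
/-- **Closed-form solution of the latent-weight subproblem (Eq. (5), SPLD rule).** For
losses `ℓ` sorted in ascending order and `τ, γ > 0`, the binary vector given by the SPLD
thresholding rule globally minimizes
`E(v) = ∑ v_j ℓ_j - τ ∑ v_j - γ (∑ v_j²)^{1/2}` over the cube `[0,1]^n`. -/
theorem spldWeights_isMinimizer
    (n : ℕ) (hn : 1 ≤ n) (τ γ : ℝ) (hτ : 0 < τ) (hγ : 0 < γ)
    (ℓ : Fin n → ℝ) (hsorted : Monotone ℓ) :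
    ∀ u : Fin n → ℝ, (∀ j, u j ∈ Set.Icc (0 : ℝ) 1) →
      splObjective ℓ τ γ (spldWeights ℓ τ γ) ≤ splObjective ℓ τ γ u := by
  classical
  intro u hu
  -- the selection predicate
  set P : Fin n → Prop := fun j => ℓ j < thresh τ γ (j : ℕ) with hPdef
  have hPdec : DecidablePred P := fun j => Real.decidableLT _ _
  set T : Finset (Fin n) := Finset.univ.filter P with hT
  set k : ℕ := T.card with hk
  have hkn : k ≤ n := by
    have := Finset.card_le_univ T
    simpa [hk] using this
  have hdown : ∀ j j' : Fin n, j' ≤ j → P j → P j' := by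
    intro j j' hle hPj
    have h1 : ℓ j' ≤ ℓ j := hsorted hle
    have h2 : thresh τ γ (j : ℕ) ≤ thresh τ γ (j' : ℕ) :=
      thresh_anti τ γ hγ.le (Fin.le_def.mp hle)
    exact lt_of_le_of_lt h1 (lt_of_lt_of_le hPj h2)
  have hmem : ∀ j : Fin n, P j ↔ (j : ℕ) < k :=
    fun j => mem_iff_lt_card P hdown j
  -- spldWeights is the indicator of P
  have hspld : ∀ j, spldWeights ℓ τ γ j = if P j then (1 : ℝ) else 0 := by
    intro j
    simp only [hPdef]
    unfold spldWeights thresh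
    by_cases h : ℓ j < τ + γ / (Real.sqrt (((j : ℕ) : ℝ) + 1) + Real.sqrt ((j : ℕ) : ℝ))
    · rw [if_pos h]; exact (@if_pos (P j) (hPdec j) h ℝ 1 0).symm
    · rw [if_neg h]; exact (@if_neg (P j) (hPdec j) h ℝ 1 0).symm
  have hw01 : ∀ j, spldWeights ℓ τ γ j = 0 ∨ spldWeights ℓ τ γ j = 1 := by
    intro j
    rw [hspld j]
    by_cases h : P j <;> simp [h]
  have hfilter : Finset.univ.filter (fun j => spldWeights ℓ τ γ j = 1) = T := by
    ext j
    simp only [Finset.mem_filter, Finset.mem_univ, true_and, hT]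
    rw [hspld j]
    by_cases h : P j <;> simp [h]
  -- objective value of the SPLD weights equals gval k
  have hsum_init : ∑ j ∈ T, ℓ j = ∑ i ∈ Finset.range k, lext ℓ i := by
    have hTeq : T = Finset.univ.filter (fun j : Fin n => (j : ℕ) < k) := by
      ext j
      simp only [hT, Finset.mem_filter, Finset.mem_univ, true_and]
      exact hmem j
    have h1 : ∑ j ∈ T, ℓ j = ∑ j : Fin n, if (j : ℕ) < k then ℓ j else 0 := by
      rw [hTeq, Finset.sum_filter]
    have h2 : ∑ i ∈ Finset.range k, lext ℓ i
        = ∑ i ∈ Finset.range n, if i < k then lext ℓ i else 0 := by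
      rw [show ∑ i ∈ Finset.range k, lext ℓ i
            = ∑ i ∈ Finset.range k, (if i < k then lext ℓ i else 0) from
          Finset.sum_congr rfl fun i hi => by
            rw [if_pos (Finset.mem_range.mp hi)]]
      exact Finset.sum_subset (Finset.range_subset_range.mpr hkn)
        (fun x _ hx => by rw [if_neg (fun h => hx (Finset.mem_range.mpr h))])
    rw [h1, h2, Finset.sum_range]
    refine Finset.sum_congr rfl fun j _ => ?_
    have : lext ℓ ((j : Fin n) : ℕ) = ℓ j := by
      unfold lext
      rw [dif_pos j.isLt]
    by_cases h : (j : ℕ) < k <;> simp [h, this]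
  have hEspl : splObjective ℓ τ γ (spldWeights ℓ τ γ) = gval (lext ℓ) τ γ k := by
    rw [binary_value ℓ τ γ _ hw01, hfilter, ← hk]
    unfold gval
    rw [hsum_init]
  -- gval is minimized at k
  have hlow : ∀ m < k, lext ℓ m < thresh τ γ m := by
    intro m hm
    have hmn : m < n := lt_of_lt_of_le hm hkn
    have : P ⟨m, hmn⟩ := (hmem ⟨m, hmn⟩).mpr hm
    have he : lext ℓ m = ℓ ⟨m, hmn⟩ := by unfold lext; rw [dif_pos hmn]
    rw [he]
    exact this
  have hhigh : ∀ m, k ≤ m → m < n → thresh τ γ m ≤ lext ℓ m := by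
    intro m hkm hmn
    have hnP : ¬ P ⟨m, hmn⟩ := by
      rw [hmem ⟨m, hmn⟩]
      simp only [Fin.val_mk]
      omega
    have he : lext ℓ m = ℓ ⟨m, hmn⟩ := by unfold lext; rw [dif_pos hmn]
    rw [he]
    exact not_lt.mp hnP
  have hgmin : ∀ m ≤ n, gval (lext ℓ) τ γ k ≤ gval (lext ℓ) τ γ m := by
    intro m hm
    rcases le_total m k with h | h
    · exact gval_le_of_le_k (lext ℓ) τ γ k hlow m k h le_rfl
    · exact gval_ge_of_ge_k (lext ℓ) τ γ k n hhigh m h hm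
  -- reduce u to a binary vector
  obtain ⟨w, hw, hwle⟩ := exists_binary ℓ τ γ hγ.le
    (Finset.univ.filter (fun j => u j ≠ 0 ∧ u j ≠ 1)).card u hu le_rfl
  set Sw : Finset (Fin n) := Finset.univ.filter (fun j => w j = 1) with hSw
  have hSwn : Sw.card ≤ n := by
    have := Finset.card_le_univ Sw
    simpa using this
  have hEw : gval (lext ℓ) τ γ Sw.card ≤ splObjective ℓ τ γ w := by
    rw [binary_value ℓ τ γ w hw, ← hSw]
    unfold gval
    have := sum_initial_le ℓ hsorted Sw
    linarith
  calc splObjective ℓ τ γ (spldWeights ℓ τ γ)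
      = gval (lext ℓ) τ γ k := hEspl
    _ ≤ gval (lext ℓ) τ γ Sw.card := hgmin Sw.card hSwn
    _ ≤ splObjective ℓ τ γ w := hEw
    _ ≤ splObjective ℓ τ γ u := hwle
end
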